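/- arXiv:2104.09405 — 3 statements merged into one kernel-verified Lean document; each statement's English description precedes it below -/
import Mathlib

section
/- Define the hyperfactorial h(n) = 0!·1!·⋯·(n-1)!. For nonnegative integers n, a, b with a + b = n, the quantity 2^{n(n+1)/2} · n! · h(2n+1) · h(a) · h(b) / (h(n+a+1) · h(n+b+1)) is a positive integer. -/
/-!
The quantity is `2 ^ (n(n+1)/2)` times MacMahon's box number
`h(a) h(b) h(c) h(a+b+c) / (h(a+b) h(b+c) h(c+a))` at `c = n + 1`, since `h(n+1) = h(n) n!`.
The box number is an integer prime by prime: by Legendre's formula the `p`-adic valuation of `h(n)`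
is `∑ᵢ F(pⁱ, n)` with `F(q, n) = ∑_{m<n} ⌊m/q⌋`, and `F(q, ·)` satisfies the inequality
`F(a+b) + F(b+c) + F(c+a) ≤ F(a) + F(b) + F(c) + F(a+b+c)`.  Because `F(q, n+q) = F(q, n) + n`,
the defect of this inequality only depends on `a, b, c` modulo `q`, and for residues it reads
`(x+y-q)₊ + (y+z-q)₊ + (z+x-q)₊ ≤ (x+y+z-q)₊ + (x+y+z-2q)₊`.
-/

open Finset

open Nat

/-- The hyperfactorial h(n) = 0!·1!·⋯·(n-1)!. -/
def hyp (n : ℕ) : ℕ := ∏ i ∈ Finset.range n, i !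

def floorSum (q n : ℕ) : ℕ := ∑ m ∈ range n, m / q

section floorSum

variable {q : ℕ}

lemma floorSum_add_self (hq : 0 < q) (n : ℕ) : floorSum q (n + q) = floorSum q n + n := by
  rw [floorSum, add_comm, sum_range_add, sum_eq_zero fun _ hm => Nat.div_eq_of_lt (mem_range.1 hm)]
  simp [Nat.add_div_left _ hq, sum_add_distrib, floorSum]

lemma floorSum_of_le {n : ℕ} (h : n ≤ q) : floorSum q n = 0 :=
  sum_eq_zero fun _ hm => Nat.div_eq_of_lt ((mem_range.1 hm).trans_le h)

lemma floorSum_of_lt_two_mul {n : ℕ} (h : n < 2 * q) : floorSum q n = n - q := by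
  rcases le_or_gt n q with hnq | hqn
  · rw [floorSum_of_le hnq]; omega
  · obtain ⟨m, rfl⟩ : ∃ m, n = m + q := ⟨n - q, by omega⟩
    rw [floorSum_add_self (by omega), floorSum_of_le (by omega)]; omega

lemma floorSum_of_lt_three_mul {n : ℕ} (h : n < 3 * q) :
    floorSum q n = (n - q) + (n - 2 * q) := by
  rcases le_or_gt n q with hnq | hqn
  · rw [floorSum_of_le hnq]; omega
  · obtain ⟨m, rfl⟩ : ∃ m, n = m + q := ⟨n - q, by omega⟩
    rw [floorSum_add_self (by omega), floorSum_of_lt_two_mul (by omega)]; omega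

def floorSumDefect (q a b c : ℕ) : ℤ :=
  floorSum q a + floorSum q b + floorSum q c + floorSum q (a + b + c)
    - floorSum q (a + b) - floorSum q (b + c) - floorSum q (c + a)

lemma floorSumDefect_add_left (hq : 0 < q) (a b c : ℕ) :
    floorSumDefect q (a + q) b c = floorSumDefect q a b c := by
  rw [floorSumDefect, floorSumDefect, add_right_comm a q b, add_right_comm (a + b) q c,
    ← add_assoc c a q]
  simp only [floorSum_add_self hq]
  push_cast
  ring

lemma floorSumDefect_rotate (a b c : ℕ) : floorSumDefect q a b c = floorSumDefect q b c a := by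
  rw [floorSumDefect, floorSumDefect, show b + c + a = a + b + c by ring]
  ring

lemma floorSumDefect_mod_left (hq : 0 < q) (a b c : ℕ) :
    floorSumDefect q (a % q) b c = floorSumDefect q a b c := by
  conv_rhs => rw [← Nat.mod_add_div a q]
  induction a / q with
  | zero => simp
  | succ k ih => rw [Nat.mul_succ, ← add_assoc, floorSumDefect_add_left hq, ih]

lemma floorSumDefect_nonneg_of_lt {x y z : ℕ} (hx : x < q) (hy : y < q) (hz : z < q) :
    0 ≤ floorSumDefect q x y z := by
  rw [floorSumDefect, floorSum_of_le hx.le, floorSum_of_le hy.le, floorSum_of_le hz.le,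
    floorSum_of_lt_three_mul (by omega), floorSum_of_lt_two_mul (by omega),
    floorSum_of_lt_two_mul (by omega), floorSum_of_lt_two_mul (by omega)]
  omega

lemma floorSumDefect_nonneg (hq : 0 < q) (a b c : ℕ) : 0 ≤ floorSumDefect q a b c := by
  have hmod := fun n => Nat.mod_lt n hq
  calc 0 ≤ floorSumDefect q (c % q) (a % q) (b % q) :=
        floorSumDefect_nonneg_of_lt (hmod c) (hmod a) (hmod b)
    _ = floorSumDefect q a b c := by
      rw [floorSumDefect_mod_left hq, ← floorSumDefect_rotate, floorSumDefect_mod_left hq,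
        ← floorSumDefect_rotate, floorSumDefect_mod_left hq]

lemma floorSum_add_add_le (hq : 0 < q) (a b c : ℕ) :
    floorSum q (a + b) + floorSum q (b + c) + floorSum q (c + a)
      ≤ floorSum q a + floorSum q b + floorSum q c + floorSum q (a + b + c) := by
  have := floorSumDefect_nonneg hq a b c
  rw [floorSumDefect] at this
  omega

end floorSum

lemma hyp_ne_zero (n : ℕ) : hyp n ≠ 0 :=
  prod_ne_zero_iff.2 fun i _ => factorial_ne_zero i

lemma hyp_succ (n : ℕ) : hyp (n + 1) = hyp n * n ! :=
  prod_range_succ _ _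

lemma factorization_hyp {p : ℕ} (hp : p.Prime) {n B : ℕ} (hnB : n ≤ B) :
    (hyp n).factorization p = ∑ i ∈ Ico 1 B, floorSum (p ^ i) n := by
  rw [hyp, factorization_prod fun i _ => factorial_ne_zero i, sum_apply']
  simp only [floorSum]
  rw [sum_comm]
  refine sum_congr rfl fun m hm => factorization_factorial hp ?_
  exact (log_le_self p m).trans_lt ((mem_range.1 hm).trans_le hnB)

theorem hyp_mul_dvd (a b c : ℕ) :
    hyp (a + b) * hyp (b + c) * hyp (c + a) ∣ hyp a * hyp b * hyp c * hyp (a + b + c) := by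
  refine (factorization_prime_le_iff_dvd (by simp [hyp_ne_zero]) (by simp [hyp_ne_zero])).1
    fun p hp => ?_
  have hv := fun n (hn : n ≤ a + b + c) => factorization_hyp hp hn
  simp only [factorization_mul, hyp_ne_zero, mul_ne_zero_iff, ne_eq, not_false_eq_true,
    and_self, Finsupp.add_apply]
  rw [hv a (by omega), hv b (by omega), hv c (by omega), hv (a + b + c) le_rfl,
    hv (a + b) (by omega), hv (b + c) (by omega), hv (c + a) (by omega)]
  simp only [← sum_add_distrib]
  exact sum_le_sum fun i _ => floorSum_add_add_le (pow_pos hp.pos i) a b c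

lemma hyp_mul_dvd_of_add_eq {n a b : ℕ} (hab : a + b = n) :
    hyp (n + a + 1) * hyp (n + b + 1) ∣ n ! * hyp (2 * n + 1) * hyp a * hyp b := by
  have h := hyp_mul_dvd a b (n + 1)
  rw [hab, hyp_succ, show b + (n + 1) = n + b + 1 by omega, show n + 1 + a = n + a + 1 by omega,
    show n + (n + 1) = 2 * n + 1 by omega] at h
  refine Nat.dvd_of_mul_dvd_mul_left (Nat.pos_of_ne_zero (hyp_ne_zero n)) ?_
  convert h using 1 <;> ring

/-- The elbow-region formula of Theorem 2.2 is a positive integer. -/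
theorem stmt_2 (n a b : ℕ) (hab : a + b = n) :
    ∃ N : ℕ, 0 < N ∧ (N : ℚ) =
      2 ^ (n * (n + 1) / 2) * n ! * hyp (2 * n + 1) * hyp a * hyp b /
        (hyp (n + a + 1) * hyp (n + b + 1)) := by
  set D := hyp (n + a + 1) * hyp (n + b + 1)
  set M := 2 ^ (n * (n + 1) / 2) * n ! * hyp (2 * n + 1) * hyp a * hyp b
  have hD : D ≠ 0 := mul_ne_zero (hyp_ne_zero _) (hyp_ne_zero _)
  have hM : M ≠ 0 := by simp [M, hyp_ne_zero, factorial_ne_zero]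
  have hdvd : D ∣ M := by
    simpa only [M, mul_assoc] using (hyp_mul_dvd_of_add_eq hab).mul_left (2 ^ (n * (n + 1) / 2))
  refine ⟨M / D, Nat.div_pos (Nat.le_of_dvd (Nat.pos_of_ne_zero hM) hdvd) (Nat.pos_of_ne_zero hD), ?_⟩
  rw [Nat.cast_div hdvd (by exact_mod_cast hD)]
  push_cast [M, D]
  rfl
end

section
/- For every positive integer n, the number 2^{n(n-1)/2} · ∏_{i=0}^{n-1} (4i+2)!/(n+2i+1)! is a positive integer. -/
/-!
Compare `p`-adic valuations of numerator and denominator prime by prime. For odd `p`,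
Legendre's formula reduces the claim to `∑ i < n, ⌊(n + 2i + 1)/m⌋ ≤ ∑ i < n, ⌊(4i + 2)/m⌋`
for every odd `m = p^k`. Replacing `n` by `n + m` raises both sides by the same amount, because
`2` and `4` are units mod `m`, so the new terms run through complete residue systems; for `n < m`
every term is below `4m` and the inequality is a direct count. For `p = 2`, `v₂((N + 1)!) ≤ N`
and `v₂((4i + 2)!) = v₂(i!) + 3i + 1`, and the resulting deficit is exactly `n(n - 1)/2`.
-/

open Nat Finset

lemma sum_range_ite_le (n c : ℕ) :
    ∑ i ∈ range n, (if c ≤ i then 1 else 0) = n - c := by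
  induction n with
  | zero => simp
  | succ k ih => rw [sum_range_succ, ih]; split <;> omega

lemma div_eq_sum_Ico_ite {x m K : ℕ} (h : x < K * m) :
    x / m = ∑ j ∈ Ico 1 K, if j * m ≤ x then 1 else 0 := by
  have hm : 0 < m := Nat.pos_of_mul_pos_left (Nat.zero_lt_of_lt h)
  have hK : x / m < K := Nat.div_lt_of_lt_mul (by rwa [mul_comm])
  simp_rw [← Nat.le_div_iff_mul_le hm, sum_boole]
  rw [show {j ∈ Ico 1 K | j ≤ x / m} = Icc 1 (x / m) by
    ext j; simp only [mem_filter, mem_Ico, mem_Icc]; omega]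
  simp

lemma sum_div_le_sum_div_of_lt {m n : ℕ} (hm : Odd m) (hn : n < m) :
    ∑ i ∈ range n, (n + 2 * i + 1) / m ≤ ∑ i ∈ range n, (4 * i + 2) / m := by
  have hm2 := Nat.odd_iff.mp hm
  have hL (j : ℕ) :
      ∑ i ∈ range n, (if j * m ≤ n + 2 * i + 1 then 1 else 0) = n - (j * m - n) / 2 := by
    rw [← sum_range_ite_le]; exact sum_congr rfl fun i _ => if_congr (by omega) rfl rfl
  have hR (j : ℕ) :
      ∑ i ∈ range n, (if j * m ≤ 4 * i + 2 then 1 else 0) = n - (j * m + 1) / 4 := by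
    rw [← sum_range_ite_le]; exact sum_congr rfl fun i _ => if_congr (by omega) rfl rfl
  rw [sum_congr rfl fun i hi => div_eq_sum_Ico_ite (K := 4) (by simp at hi; omega),
    sum_congr rfl fun i hi => div_eq_sum_Ico_ite (K := 4) (by simp at hi; omega),
    sum_comm, sum_comm (s := range n)]
  simp only [hL, hR, sum_Ico_succ_top (show 1 ≤ 3 by norm_num),
    sum_Ico_succ_top (show 1 ≤ 2 by norm_num), sum_Ico_succ_top (le_refl 1), Ico_self, sum_empty]
  omega

lemma sum_range_add_mul_mod {m d : ℕ} (a : ℕ) (hd : d.Coprime m) :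
    ∑ j ∈ range m, (a + d * j) % m = ∑ j ∈ range m, j := by
  rcases m.eq_zero_or_pos with rfl | hm
  · simp
  have maps : ∀ j ∈ range m, (a + d * j) % m ∈ range m :=
    fun j _ => mem_range.mpr (mod_lt _ hm)
  have inj : Set.InjOn (fun j => (a + d * j) % m) (range m) := by
    intro i hi j hj hij
    have := Nat.ModEq.cancel_left_of_coprime hd.symm (Nat.ModEq.add_left_cancel' a hij)
    simpa [Nat.ModEq, Nat.mod_eq_of_lt (mem_range.mp hi), Nat.mod_eq_of_lt (mem_range.mp hj)]
      using this
  exact sum_nbij _ maps inj (surjOn_of_injOn_of_card_le _ maps inj le_rfl) fun _ _ => rfl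

lemma two_mul_sum_range_add_mul_div {m d : ℕ} (a : ℕ) (hm : 0 < m) (hd : d.Coprime m) :
    2 * ∑ j ∈ range m, (a + d * j) / m = 2 * a + (d - 1) * (m - 1) := by
  have hdiv : (∑ j ∈ range m, (a + d * j) / m) * m + ∑ j ∈ range m, (a + d * j) % m =
      ∑ j ∈ range m, (a + d * j) := by
    rw [sum_mul, ← sum_add_distrib]
    exact sum_congr rfl fun j _ => Nat.div_add_mod' _ _
  rw [sum_range_add_mul_mod a hd, sum_add_distrib, sum_const, card_range, smul_eq_mul,
    ← mul_sum] at hdiv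
  have gauss := sum_range_id_mul_two m
  obtain ⟨k, rfl⟩ : ∃ k, m = k + 1 := ⟨m - 1, by omega⟩
  obtain rfl | ⟨e, rfl⟩ : d = 0 ∨ ∃ e, d = e + 1 := by cases d <;> simp
  · obtain rfl : k = 0 := by simpa using hd
    simp
  simp only [add_tsub_cancel_right] at gauss ⊢
  refine Nat.eq_of_mul_eq_mul_right hm ?_
  zify at hdiv gauss ⊢
  linear_combination 2 * hdiv + e * gauss

lemma sum_div_le_sum_div_of_odd {m : ℕ} (hm : Odd m) (n : ℕ) :
    ∑ i ∈ range n, (n + 2 * i + 1) / m ≤ ∑ i ∈ range n, (4 * i + 2) / m := by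
  induction n using Nat.strong_induction_on with
  | _ n ih =>
  rcases lt_or_ge n m with hn | hn
  · exact sum_div_le_sum_div_of_lt hm hn
  obtain ⟨k, rfl⟩ : ∃ k, n = k + m := ⟨n - m, by omega⟩
  have hm0 : 0 < m := hm.pos
  have cop2 : Nat.Coprime 2 m := Nat.coprime_two_left.mpr hm
  have cop4 : Nat.Coprime 4 m := by simpa using cop2.pow_left 2
  have hR : 2 * ∑ i ∈ range (k + m), (4 * i + 2) / m =
      2 * ∑ i ∈ range k, (4 * i + 2) / m + 2 * (4 * k + 2) + 3 * (m - 1) := by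
    have := two_mul_sum_range_add_mul_div (4 * k + 2) hm0 cop4
    simp only [sum_range_add, show ∀ j, 4 * (k + j) + 2 = 4 * k + 2 + 4 * j by omega]
    omega
  have hL : 2 * ∑ i ∈ range (k + m), (k + m + 2 * i + 1) / m =
      2 * ∑ i ∈ range k, (k + 2 * i + 1) / m + 2 * (3 * k + 1) + (m - 1) + 2 * (k + m) := by
    have := two_mul_sum_range_add_mul_div (3 * k + 1) hm0 cop2
    simp only [show ∀ i, k + m + 2 * i + 1 = k + 2 * i + 1 + m by omega,
      Nat.add_div_right _ hm0, sum_add_distrib, sum_const, card_range, smul_eq_mul, mul_one,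
      sum_range_add, show ∀ j, k + 2 * (k + j) + 1 = 3 * k + 1 + 2 * j by omega]
    omega
  have := ih k (by omega)
  omega

lemma padicValNat_sum_factorial_le_of_odd {p : ℕ} [Fact p.Prime] (hp : Odd p) (n : ℕ) :
    ∑ i ∈ range n, padicValNat p (n + 2 * i + 1)! ≤
      ∑ i ∈ range n, padicValNat p (4 * i + 2)! := by
  have legendre {N : ℕ} (hN : N < 4 * n) :
      padicValNat p N ! = ∑ k ∈ Ico 1 (4 * n), N / p ^ k :=
    padicValNat_factorial ((Nat.log_le_self p N).trans_lt hN)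
  rw [sum_congr rfl fun i hi => legendre (by simp at hi; omega),
    sum_congr rfl fun i hi => legendre (by simp at hi; omega), sum_comm, sum_comm (s := range n)]
  exact sum_le_sum fun k _ => sum_div_le_sum_div_of_odd hp.pow n

lemma padicValNat_two_factorial_four_mul_add_two (i : ℕ) :
    padicValNat 2 (4 * i + 2)! = padicValNat 2 i ! + 3 * i + 1 := by
  rw [show 4 * i + 2 = 2 * (2 * i + 1) by ring, padicValNat_factorial_mul,
    padicValNat_factorial_mul_add _ one_lt_two, padicValNat_factorial_mul]
  ring

lemma sum_range_add_two_mul (n : ℕ) :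
    ∑ i ∈ range n, (n + 2 * i) = n * (n - 1) / 2 + ∑ i ∈ range n, (3 * i + 1) := by
  rw [sum_add_distrib, sum_add_distrib, ← mul_sum, ← mul_sum, sum_const, sum_const, card_range,
    smul_eq_mul, smul_eq_mul, mul_one, ← sum_range_id]
  have := sum_range_id_mul_two n
  have : n * n = n * (n - 1) + n := by cases n <;> simp [Nat.mul_succ]
  omega

lemma padicValNat_two_sum_factorial_le (n : ℕ) :
    ∑ i ∈ range n, padicValNat 2 (n + 2 * i + 1)! ≤
      n * (n - 1) / 2 + ∑ i ∈ range n, padicValNat 2 (4 * i + 2)! := by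
  calc ∑ i ∈ range n, padicValNat 2 (n + 2 * i + 1)!
      ≤ ∑ i ∈ range n, (n + 2 * i) :=
        sum_le_sum fun i _ => Nat.le_of_lt_succ (padicValNat_factorial_lt_of_ne_zero 2 (by omega))
    _ = n * (n - 1) / 2 + ∑ i ∈ range n, (3 * i + 1) := sum_range_add_two_mul n
    _ ≤ n * (n - 1) / 2 + ∑ i ∈ range n, padicValNat 2 (4 * i + 2)! := by
        gcongr with i
        rw [padicValNat_two_factorial_four_mul_add_two]
        omega

lemma factorization_prod_factorial {ι : Type*} (s : Finset ι) (f : ι → ℕ) {p : ℕ}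
    (hp : p.Prime) :
    (∏ i ∈ s, (f i)!).factorization p = ∑ i ∈ s, padicValNat p (f i)! := by
  rw [factorization_prod fun i _ => factorial_ne_zero _, Finset.sum_apply']
  simp only [factorization_def _ hp]

lemma prod_factorial_dvd_two_pow_mul_prod_factorial (n : ℕ) :
    ∏ i ∈ range n, (n + 2 * i + 1)! ∣
      2 ^ (n * (n - 1) / 2) * ∏ i ∈ range n, (4 * i + 2)! := by
  have hprod {f : ℕ → ℕ} : ∏ i ∈ range n, (f i)! ≠ 0 :=
    prod_ne_zero_iff.mpr fun i _ => factorial_ne_zero _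
  rw [← factorization_prime_le_iff_dvd hprod (mul_ne_zero (by positivity) hprod)]
  intro p hp
  have := Fact.mk hp
  rw [Nat.factorization_mul (by positivity) hprod, Finsupp.add_apply, factorization_pow,
    Finsupp.smul_apply, smul_eq_mul, factorization_prod_factorial _ _ hp,
    factorization_prod_factorial _ _ hp, Nat.prime_two.factorization, Finsupp.single_apply]
  rcases hp.eq_two_or_odd' with rfl | hodd
  · simpa using padicValNat_two_sum_factorial_le n
  · rw [if_neg (by rintro rfl; exact Nat.not_odd_iff_even.mpr even_two hodd), mul_zero, zero_add]
    exact padicValNat_sum_factorial_le_of_odd hodd n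

theorem stmt_6_general (n : ℕ) :
    ∃ N : ℕ, 0 < N ∧ (N : ℚ) =
      2 ^ (n * (n - 1) / 2) *
        ∏ i ∈ Finset.range n, ((4 * i + 2)! : ℚ) / ((n + 2 * i + 1)!) := by
  have hdvd := prod_factorial_dvd_two_pow_mul_prod_factorial n
  have hden : 0 < ∏ i ∈ range n, (n + 2 * i + 1)! := prod_pos fun i _ => factorial_pos _
  refine ⟨_, Nat.div_pos (Nat.le_of_dvd (by positivity) hdvd) hden, ?_⟩
  rw [Nat.cast_div hdvd (by positivity), prod_div_distrib]
  push_cast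
  ring

/-- Di Francesco's conjectured formula (1.1) for the number of domino tilings of T_n
is a positive integer. -/
theorem stmt_6 (n : ℕ) (hn : 1 ≤ n) :
    ∃ N : ℕ, 0 < N ∧ (N : ℚ) =
      2 ^ (n * (n - 1) / 2) *
        ∏ i ∈ Finset.range n, ((4 * i + 2)! : ℚ) / ((n + 2 * i + 1)!) :=
  stmt_6_general n
end

section
/- For every positive integer n, ∏_{i=0}^{n-1} (3i+1)!/(n+i)! is a positive integer. -/
/-!
By Legendre's formula, `∏ (n + i)! ∣ ∏ (3i + 1)!` as soon as
`∑ᵢ ⌊(n + i)/m⌋ ≤ ∑ᵢ ⌊(3i + 1)/m⌋` for every `m ≥ 1`. The two sequences have the same sum,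
so this is equivalent to the reverse inequality between the sums of their residues mod `m`.
Residue sums over `m` consecutive indices do not depend on where the window starts, so writing
`n = r + q m` reduces everything to `n ≤ m`. There all quotients are `0`, `1` or `2`, and
counting the indices past each threshold settles the inequality.
-/

open Nat Finset Function

section PeriodicSums

variable {M : Type*} [AddCancelCommMonoid M] {f : ℕ → M} {m : ℕ}

theorem Function.Periodic.sum_range_add (hf : Periodic f m) (a : ℕ) :
    ∑ i ∈ range m, f (a + i) = ∑ i ∈ range m, f i := by
  induction a with
  | zero => simp
  | succ a ih =>
    rw [← ih]
    apply add_right_cancel (b := f a)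
    calc ∑ i ∈ range m, f (a + 1 + i) + f a
        = ∑ i ∈ range (m + 1), f (a + i) := by
          rw [sum_range_succ']; simp only [add_zero, add_assoc, add_comm 1]
      _ = ∑ i ∈ range m, f (a + i) + f a := by rw [sum_range_succ, hf a]

theorem Function.Periodic.sum_range_mul_add (hf : Periodic f m) (a q : ℕ) :
    ∑ i ∈ range (q * m), f (a + i) = q • ∑ i ∈ range m, f i := by
  induction q with
  | zero => simp
  | succ q ih =>
    rw [succ_mul, Finset.sum_range_add, ih, succ_nsmul]
    simp only [← add_assoc]
    rw [hf.sum_range_add]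

end PeriodicSums

theorem sum_div_le_sum_div_iff_sum_mod_le {ι : Type*} {s : Finset ι} {x y : ι → ℕ} {m : ℕ}
    (hm : 0 < m) (hxy : ∑ i ∈ s, x i = ∑ i ∈ s, y i) :
    ∑ i ∈ s, y i / m ≤ ∑ i ∈ s, x i / m ↔ ∑ i ∈ s, x i % m ≤ ∑ i ∈ s, y i % m := by
  have h (z : ι → ℕ) : m * ∑ i ∈ s, z i / m + ∑ i ∈ s, z i % m = ∑ i ∈ s, z i := by
    rw [mul_sum, ← sum_add_distrib]
    exact sum_congr rfl fun i _ ↦ Nat.div_add_mod (z i) m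
  have hx := h x
  have hy := h y
  rw [← Nat.mul_le_mul_left_iff hm]
  omega

theorem prod_factorial_dvd_prod_factorial {ι : Type*} {s : Finset ι} {a b : ι → ℕ}
    (h : ∀ m, 0 < m → ∑ i ∈ s, a i / m ≤ ∑ i ∈ s, b i / m) :
    ∏ i ∈ s, (a i)! ∣ ∏ i ∈ s, (b i)! := by
  have ha : ∀ i ∈ s, (a i)! ≠ 0 := fun i _ ↦ factorial_ne_zero _
  have hb : ∀ i ∈ s, (b i)! ≠ 0 := fun i _ ↦ factorial_ne_zero _
  rw [← Nat.factorization_le_iff_dvd (prod_ne_zero_iff.mpr ha) (prod_ne_zero_iff.mpr hb),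
    Nat.factorization_prod ha, Nat.factorization_prod hb]
  intro p
  by_cases hp : p.Prime
  · set B := s.sup a ⊔ s.sup b + 1
    have legendre (k : ℕ) (hk : k < B) : (k !).factorization p = ∑ j ∈ Ico 1 B, k / p ^ j :=
      Nat.factorization_factorial hp ((Nat.log_le_self p k).trans_lt hk)
    simp only [Finsupp.coe_finsetSum, Finset.sum_apply]
    rw [sum_congr rfl fun i hi ↦ legendre (a i) (by have := le_sup (f := a) hi; omega),
      sum_congr rfl fun i hi ↦ legendre (b i) (by have := le_sup (f := b) hi; omega),
      sum_comm, sum_comm (s := s)]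
    exact sum_le_sum fun j _ ↦ h (p ^ j) (pow_pos hp.pos j)
  · simp [Nat.factorization_eq_zero_of_not_prime _ hp]

theorem div_eq_ite_add_ite {x m : ℕ} (hx : x < 3 * m) :
    x / m = (if m ≤ x then 1 else 0) + (if 2 * m ≤ x then 1 else 0) := by
  split_ifs
  · exact Nat.div_eq_of_lt_le (by omega) (by omega)
  · exact Nat.div_eq_of_lt_le (by omega) (by omega)
  · omega
  · exact Nat.div_eq_of_lt (by omega)

theorem sum_range_boole_le (t n : ℕ) : ∑ i ∈ range n, (if t ≤ i then 1 else 0) = n - t := by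
  induction n with
  | zero => simp
  | succ n ih => rw [sum_range_succ, ih]; split_ifs <;> omega

namespace AlternatingSignMatrix

theorem sum_range_three_mul_add_one_eq (n : ℕ) :
    ∑ i ∈ range n, (3 * i + 1) = ∑ i ∈ range n, (n + i) := by
  have gauss := sum_range_id_mul_two n
  rw [sum_add_distrib, sum_add_distrib, ← mul_sum]
  simp only [sum_const, card_range, smul_eq_mul, mul_one]
  rcases n with _ | n
  · simp
  · simp only [add_tsub_cancel_right] at gauss
    nlinarith

theorem sum_div_le_of_le {m n : ℕ} (hnm : n ≤ m) :
    ∑ i ∈ range n, (n + i) / m ≤ ∑ i ∈ range n, (3 * i + 1) / m := by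
  have hl : ∀ i ∈ range n, (n + i) / m =
      (if m - n ≤ i then 1 else 0) + (if 2 * m - n ≤ i then 1 else 0) := by
    intro i hi
    have := mem_range.mp hi
    rw [div_eq_ite_add_ite (by omega)]
    split_ifs <;> omega
  have hr : ∀ i ∈ range n, (3 * i + 1) / m =
      (if (m + 1) / 3 ≤ i then 1 else 0) + (if (2 * m + 1) / 3 ≤ i then 1 else 0) := by
    intro i hi
    have := mem_range.mp hi
    rw [div_eq_ite_add_ite (by omega)]
    split_ifs <;> omega
  rw [sum_congr rfl hl, sum_congr rfl hr]
  simp only [sum_add_distrib, sum_range_boole_le]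
  omega

theorem sum_mod_le_of_le {m n : ℕ} (hm : 0 < m) (hnm : n ≤ m) :
    ∑ i ∈ range n, (3 * i + 1) % m ≤ ∑ i ∈ range n, (n + i) % m :=
  (sum_div_le_sum_div_iff_sum_mod_le hm (sum_range_three_mul_add_one_eq n)).mp
    (sum_div_le_of_le hnm)

theorem sum_mod_le {m : ℕ} (hm : 0 < m) (n : ℕ) :
    ∑ i ∈ range n, (3 * i + 1) % m ≤ ∑ i ∈ range n, (n + i) % m := by
  obtain ⟨r, q, hr, rfl⟩ : ∃ r q, r < m ∧ n = r + q * m :=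
    ⟨n % m, n / m, Nat.mod_lt n hm, by rw [mul_comm, Nat.mod_add_div]⟩
  have hperiodic : Periodic (fun i ↦ (3 * i + 1) % m) m := fun i ↦ by
    dsimp only
    rw [mul_add, add_right_comm, Nat.add_mul_mod_self_right]
  have hshift : ∀ i, (r + q * m + i) % m = (r + i) % m := fun i ↦ by
    rw [add_right_comm, Nat.add_mul_mod_self_right]
  -- the case `n = m` compares one full period of the two residue sequences
  have hperiod : ∑ i ∈ range m, (3 * i + 1) % m ≤ ∑ i ∈ range m, i % m := by
    simpa using sum_mod_le_of_le hm le_rfl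
  have hperiods := Nat.mul_le_mul_left q hperiod
  have hrest := sum_mod_le_of_le hm hr.le
  rw [sum_congr rfl fun i _ ↦ hshift i, sum_range_add, sum_range_add]
  simp only [← add_assoc]
  rw [hperiodic.sum_range_mul_add, (Nat.periodic_mod m).sum_range_mul_add, smul_eq_mul,
    smul_eq_mul]
  omega

theorem sum_div_le {m : ℕ} (hm : 0 < m) (n : ℕ) :
    ∑ i ∈ range n, (n + i) / m ≤ ∑ i ∈ range n, (3 * i + 1) / m :=
  (sum_div_le_sum_div_iff_sum_mod_le hm (sum_range_three_mul_add_one_eq n)).mpr (sum_mod_le hm n)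

end AlternatingSignMatrix

theorem stmt_12_general (n : ℕ) :
    ∃ N : ℕ, 0 < N ∧ (N : ℚ) =
      ∏ i ∈ Finset.range n, ((3 * i + 1)! : ℚ) / ((n + i)!) := by
  obtain ⟨N, hN⟩ : ∏ i ∈ range n, (n + i)! ∣ ∏ i ∈ range n, (3 * i + 1)! :=
    prod_factorial_dvd_prod_factorial fun _ hm ↦ AlternatingSignMatrix.sum_div_le hm n
  have hpos : 0 < ∏ i ∈ range n, (n + i)! := prod_pos fun i _ ↦ factorial_pos _
  refine ⟨N, Nat.pos_of_mul_pos_left (hN ▸ prod_pos fun i _ ↦ factorial_pos _), ?_⟩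
  rw [prod_div_distrib, ← Nat.cast_prod, ← Nat.cast_prod, hN, Nat.cast_mul,
    mul_div_cancel_left₀ _ (by exact_mod_cast hpos.ne')]

/-- The alternating sign matrix number A_n = ∏_{i=0}^{n-1} (3i+1)!/(n+i)! is a
positive integer. -/
theorem stmt_12 (n : ℕ) (hn : 1 ≤ n) :
    ∃ N : ℕ, 0 < N ∧ (N : ℚ) =
      ∏ i ∈ Finset.range n, ((3 * i + 1)! : ℚ) / ((n + i)!) :=
  stmt_12_general n
end
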